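/- Let T and T_m (m ∈ ℕ) be bounded self-adjoint linear operators on a Hilbert space H with T_m → T strongly. Let λ be in the essential spectrum of T, and let (λ_m, u_m) be eigenpairs of T_m with λ_m → λ and ‖u_m‖ = 1. Then (u_m) has a subsequence converging weakly to 0. -/

import Mathlib

/-!
In fact the whole sequence converges weakly to `0`. The limit `λ` of the real numbers `λₘ` is
real, so for every `z`
`⟪uₘ, (T - λ) z⟫ = ⟪uₘ, (T - Tₘ) z⟫ + ⟪(λₘ - λ) uₘ, z⟫ → 0`.
Since `λ` is not an eigenvalue of the self-adjoint operator `T`, the range of `T - λ` is dense,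
and a bounded sequence whose inner products tend to `0` on a dense set converges weakly to `0`.
-/

open Filter Topology ComplexConjugate

section

variable {𝕜 E : Type*} [RCLike 𝕜] [NormedAddCommGroup E] [InnerProductSpace 𝕜 E]

local notation "⟪" x ", " y "⟫" => inner 𝕜 x y

theorem LinearMap.IsSymmetric.conj_eq_of_apply_eq_smul {A : E →ₗ[𝕜] E} (hA : A.IsSymmetric)
    {μ : 𝕜} {u : E} (hu : u ≠ 0) (h : A u = μ • u) : conj μ = μ :=
  hA.conj_eigenvalue_eq_self <|
    Module.End.hasEigenvalue_of_hasEigenvector ⟨Module.End.mem_eigenspace_iff.mpr h, hu⟩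

theorem IsSelfAdjoint.denseRange_of_ker_eq_bot [CompleteSpace E] {A : E →L[𝕜] E}
    (hA : IsSelfAdjoint A) (hker : (A : E →ₗ[𝕜] E).ker = ⊥) : DenseRange A := by
  have : (A : E →ₗ[𝕜] E).range.topologicalClosure = ⊤ := by
    rw [Submodule.topologicalClosure_eq_top_iff, ContinuousLinearMap.orthogonal_range,
      hA.adjoint_eq, hker]
  change Dense (Set.range A)
  simpa only [LinearMap.coe_range, ContinuousLinearMap.coe_coe] using
    Submodule.dense_iff_topologicalClosure_eq_top.mpr this

theorem tendsto_inner_zero_of_denseRange {ι F : Type*} {l : Filter ι} {u : ι → E} {C : ℝ}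
    (hu : ∀ i, ‖u i‖ ≤ C) {f : F → E} (hf : DenseRange f)
    (h : ∀ y, Tendsto (fun i => ⟪u i, f y⟫) l (𝓝 0)) (x : E) :
    Tendsto (fun i => ⟪u i, x⟫) l (𝓝 0) := by
  have hbdd : ∃ C, ∀ i, ‖innerSL 𝕜 (u i)‖ ≤ C :=
    ⟨C, fun i => (innerSL_apply_norm 𝕜 (u i)).trans_le (hu i)⟩
  have hequi : Equicontinuous fun i => ⇑(innerSL 𝕜 (u i)) :=
    ((NormedSpace.equicontinuous_TFAE fun i => innerSL 𝕜 (u i)).out 5 1).mp hbdd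
  exact hf.induction_on x (hequi.isClosed_setOfPred_tendsto continuous_const) h

theorem tendsto_inner_of_norm_le_of_tendsto_zero {ι : Type*} {l : Filter ι} {u w : ι → E}
    {C : ℝ} (hu : ∀ i, ‖u i‖ ≤ C) (hw : Tendsto w l (𝓝 0)) :
    Tendsto (fun i => ⟪u i, w i⟫) l (𝓝 0) :=
  hw.op_zero_isBoundedUnder_le (isBoundedUnder_of ⟨C, hu⟩) (fun w u => ⟪u, w⟫)
    fun w u => (norm_inner_le_norm u w).trans_eq (mul_comm _ _)

theorem inner_sub_smul_eq {S : E →ₗ[𝕜] E} (hS : S.IsSymmetric) {μ : 𝕜}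
    (hμ : conj μ = μ) (u v z : E) :
    ⟪u, v - μ • z⟫ = ⟪u, v - S z⟫ + ⟪S u - μ • u, z⟫ := by
  rw [inner_sub_left, hS u z, inner_smul_left, hμ, inner_sub_right,
    inner_sub_right, inner_smul_right]
  simp

theorem tendsto_inner_eigenvector_apply_sub_smul {ι : Type*} {l : Filter ι}
    {T : E →L[𝕜] E} {S : ι → E →L[𝕜] E} (hS : ∀ i, (S i : E →ₗ[𝕜] E).IsSymmetric)
    {u : ι → E} {C : ℝ} (hu : ∀ i, ‖u i‖ ≤ C) {μ : ι → 𝕜} (heig : ∀ i, S i (u i) = μ i • u i)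
    {μ₀ : 𝕜} (hμ₀ : conj μ₀ = μ₀) (hμ : Tendsto μ l (𝓝 μ₀))
    {z : E} (hz : Tendsto (fun i => S i z) l (𝓝 (T z))) :
    Tendsto (fun i => ⟪u i, T z - μ₀ • z⟫) l (𝓝 0) := by
  have hstrong : Tendsto (fun i => T z - S i z) l (𝓝 0) := by
    simpa using (tendsto_const_nhds (x := T z)).sub hz
  have heig_defect : Tendsto (fun i => S i (u i) - μ₀ • u i) l (𝓝 0) := by
    simp_rw [heig, ← sub_smul]
    exact (tendsto_sub_nhds_zero_iff.mpr hμ).zero_smul_isBoundedUnder_le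
      (isBoundedUnder_of ⟨C, hu⟩)
  have hsum := (tendsto_inner_of_norm_le_of_tendsto_zero hu hstrong).add
    (heig_defect.inner (𝕜 := 𝕜) (tendsto_const_nhds (x := z)))
  rw [inner_zero_left, add_zero] at hsum
  exact hsum.congr fun i => (inner_sub_smul_eq (hS i) hμ₀ (u i) (T z) z).symm

end

theorem stmt_1 {H : Type*} [NormedAddCommGroup H] [InnerProductSpace ℂ H]
    [CompleteSpace H]
    (T : H →L[ℂ] H) (Tm : ℕ → H →L[ℂ] H)
    (hT : IsSelfAdjoint T) (hTm : ∀ m, IsSelfAdjoint (Tm m))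
    (hstrong : ∀ x : H, Filter.Tendsto (fun m => Tm m x) Filter.atTop (nhds (T x)))
    (lam : ℂ) (hess : ∀ v : H, T v = lam • v → v = 0)
    (lamm : ℕ → ℂ) (um : ℕ → H)
    (heig : ∀ m, Tm m (um m) = lamm m • um m)
    (hnorm : ∀ m, ‖um m‖ = 1)
    (hconv : Filter.Tendsto lamm Filter.atTop (nhds lam)) :
    ∃ φ : ℕ → ℕ, StrictMono φ ∧
      ∀ x : H, Filter.Tendsto (fun n => (inner ℂ (um (φ n)) x : ℂ))
        Filter.atTop (nhds (0 : ℂ)) := by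
  have hreal (m : ℕ) : conj (lamm m) = lamm m :=
    (hTm m).isSymmetric.conj_eq_of_apply_eq_smul
      (ne_zero_of_norm_ne_zero (by simp [hnorm m])) (heig m)
  have hlam : conj lam = lam :=
    tendsto_nhds_unique ((Complex.continuous_conj.tendsto lam).comp hconv)
      (hconv.congr fun m => (hreal m).symm)
  have hself : IsSelfAdjoint (T - lam • 1) := hT.sub (IsSelfAdjoint.smul hlam (.one _))
  have hker : ((T - lam • 1 : H →L[ℂ] H) : H →ₗ[ℂ] H).ker = ⊥ :=
    LinearMap.ker_eq_bot'.mpr fun v hv => hess v (by simpa [sub_eq_zero] using hv)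
  refine ⟨id, strictMono_id, tendsto_inner_zero_of_denseRange (fun m => (hnorm m).le)
    (hself.denseRange_of_ker_eq_bot hker) fun z => ?_⟩
  simpa using tendsto_inner_eigenvector_apply_sub_smul (fun m => (hTm m).isSymmetric)
    (fun m => (hnorm m).le) heig hlam hconv (hstrong z)
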